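/- For every positive integer p, Σ_{k=1}^{p} (−1)^{k−1} · (2p)!/(2p+1−2k)! · ζ(2k)/π^{2k} = p/(2p+1), where ζ is the Riemann zeta function. -/

import Mathlib

open scoped BigOperators
open Real

noncomputable def zetaR (s : ℕ) : ℝ := ∑' n : ℕ, 1 / ((n : ℝ) + 1) ^ s
noncomputable def etaR (s : ℕ) : ℝ := ∑' n : ℕ, (-1 : ℝ) ^ n / ((n : ℝ) + 1) ^ s
noncomputable def betaR (s : ℕ) : ℝ := ∑' m : ℕ, (-1 : ℝ) ^ m / (2 * (m : ℝ) + 1) ^ s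

/-!
Euler's formula `ζ(2k) / π^(2k) = (-1)^(k+1) 2^(2k-1) B_(2k) / (2k)!` turns the `k`-th summand
into `C(2p+1, 2k) 4^k B_(2k) / (2(2p+1))`, so the claim becomes
`∑_{k=1}^p C(2p+1, 2k) 4^k B_(2k) = 2p`. This is the vanishing of
`2^n B_n(1/2) = ∑_i C(n, i) 2^i B_i` for odd `n = 2p+1` (reflection `B_n(1-x) = (-1)^n B_n(x)`),
once the terms `i = 0, 1` are split off and the odd Bernoulli numbers beyond `B_1` are dropped.
-/

open Finset Nat

theorem Finset.sum_range_two_mul {M : Type*} [AddCommMonoid M] (f : ℕ → M) (m : ℕ) :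
    ∑ i ∈ range (2 * m), f i = ∑ k ∈ range m, (f (2 * k) + f (2 * k + 1)) := by
  induction m with
  | zero => simp
  | succ m ih => rw [Nat.mul_succ, sum_range_succ, sum_range_succ, sum_range_succ, ih, add_assoc]

theorem Polynomial.bernoulli_eval_half_of_odd {n : ℕ} (hn : Odd n) :
    (Polynomial.bernoulli n).eval (1 / 2 : ℚ) = 0 := by
  have h := Polynomial.bernoulli_eval_one_sub n (1 / 2)
  rw [hn.neg_one_pow, show (1 : ℚ) - 1 / 2 = 1 / 2 by norm_num] at h
  linarith

theorem two_pow_mul_bernoulli_eval_half (n : ℕ) :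
    2 ^ n * (Polynomial.bernoulli n).eval (1 / 2 : ℚ) =
      ∑ i ∈ range (n + 1), (n.choose i : ℚ) * 2 ^ i * bernoulli i := by
  rw [Polynomial.bernoulli, Polynomial.eval_finsetSum, mul_sum]
  refine sum_congr rfl fun i hi => ?_
  rw [Polynomial.eval_monomial, ← pow_mul_pow_sub 2 (mem_range_succ_iff.mp hi), one_div, inv_pow]
  field_simp

theorem sum_choose_mul_two_pow_mul_bernoulli_of_odd {n : ℕ} (hn : Odd n) :
    ∑ i ∈ range (n + 1), (n.choose i : ℚ) * 2 ^ i * bernoulli i = 0 := by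
  rw [← two_pow_mul_bernoulli_eval_half, Polynomial.bernoulli_eval_half_of_odd hn, mul_zero]

theorem sum_Icc_choose_mul_four_pow_mul_bernoulli (p : ℕ) :
    ∑ k ∈ Icc 1 p, ((2 * p + 1).choose (2 * k) : ℚ) * 4 ^ k * bernoulli (2 * k) = 2 * p := by
  set f : ℕ → ℚ := fun i => ((2 * p + 1).choose i : ℚ) * 2 ^ i * bernoulli i
  have hodd : ∑ k ∈ range (p + 1), f (2 * k + 1) = -(2 * p + 1) := by
    rw [sum_eq_single_of_mem 0 (by simp)]
    · simp only [f, mul_zero, zero_add, choose_one_right, pow_one, bernoulli_one]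
      push_cast
      ring
    · intro k _ hk
      simp [f, bernoulli_eq_zero_of_odd (odd_two_mul_add_one k) (by omega)]
  have heven : ∑ k ∈ range (p + 1), f (2 * k) =
      1 + ∑ k ∈ Icc 1 p, ((2 * p + 1).choose (2 * k) : ℚ) * 4 ^ k * bernoulli (2 * k) := by
    rw [sum_range_succ', ← Ico_add_one_right_eq_Icc, sum_Ico_eq_sum_range, add_comm]
    congr 1
    · simp [f]
    · refine sum_congr rfl fun k _ => ?_
      rw [add_comm 1 k]
      norm_num [f, pow_mul]
  have h := sum_choose_mul_two_pow_mul_bernoulli_of_odd (odd_two_mul_add_one p)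
  rw [show 2 * p + 1 + 1 = 2 * (p + 1) by ring, sum_range_two_mul, sum_add_distrib, hodd,
    heven] at h
  linarith

theorem zetaR_two_mul {k : ℕ} (hk : k ≠ 0) :
    zetaR (2 * k) =
      (-1) ^ (k + 1) * 2 ^ (2 * k - 1) * π ^ (2 * k) * bernoulli (2 * k) / (2 * k)! := by
  have h := (hasSum_nat_add_iff' 1).mpr (hasSum_zeta_nat hk)
  simp only [range_one, sum_singleton, Nat.cast_zero, zero_pow (by omega : 2 * k ≠ 0), div_zero,
    sub_zero, Nat.cast_add, Nat.cast_one] at h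
  exact h.tsum_eq

theorem summand_eq_choose_mul_four_pow_mul_bernoulli {p k : ℕ} (hk : k ∈ Icc 1 p) :
    (-1 : ℝ) ^ (k - 1) * (((2 * p)! : ℝ) / ((2 * p + 1 - 2 * k)! : ℝ)) *
        (zetaR (2 * k) / π ^ (2 * k)) =
      ((2 * p + 1).choose (2 * k) : ℝ) * 4 ^ k * bernoulli (2 * k) / (2 * (2 * p + 1)) := by
  obtain ⟨hk1, hkp⟩ := mem_Icc.mp hk
  have hfact : ((2 * p + 1).choose (2 * k) : ℝ) * (2 * k)! * (2 * p + 1 - 2 * k)! =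
      (2 * p + 1) * (2 * p)! := by
    exact_mod_cast (choose_mul_factorial_mul_factorial (by omega)).trans (factorial_succ _)
  have hsign : (-1 : ℝ) ^ (k - 1) * (-1) ^ (k + 1) = 1 := by
    rw [← pow_add, show k - 1 + (k + 1) = 2 * k by omega, pow_mul, neg_one_sq, one_pow]
  have hpow : (4 : ℝ) ^ k = 2 * 2 ^ (2 * k - 1) := by
    rw [← pow_succ' (2 : ℝ), show 2 * k - 1 + 1 = 2 * k by omega, pow_mul]; norm_num
  rw [zetaR_two_mul (by omega), hpow]
  field_simp
  linear_combination (bernoulli (2 * k) : ℝ) * ((2 * p + 1) * (2 * p)! * hsign - hfact)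

theorem stmt5_general (p : ℕ) :
    ∑ k ∈ Finset.Icc 1 p, (-1 : ℝ) ^ (k - 1) *
        (((2 * p).factorial : ℝ) / ((2 * p + 1 - 2 * k).factorial : ℝ)) *
        (zetaR (2 * k) / π ^ (2 * k))
      = (p : ℝ) / (2 * (p : ℝ) + 1) := by
  rw [sum_congr rfl fun k hk => summand_eq_choose_mul_four_pow_mul_bernoulli hk, ← sum_div]
  have hsum := congrArg ((↑) : ℚ → ℝ) (sum_Icc_choose_mul_four_pow_mul_bernoulli p)
  push_cast at hsum
  rw [hsum]
  field_simp

theorem stmt5 (p : ℕ) (hp : 0 < p) :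
    ∑ k ∈ Finset.Icc 1 p, (-1 : ℝ) ^ (k - 1) *
        (((2 * p).factorial : ℝ) / ((2 * p + 1 - 2 * k).factorial : ℝ)) *
        (zetaR (2 * k) / π ^ (2 * k))
      = (p : ℝ) / (2 * (p : ℝ) + 1) :=
  stmt5_general p
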